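/- arXiv:1206.2057 — 5 statements merged into one kernel-verified Lean document; each statement's English description precedes it below -/
import Mathlib

section
/- The synchronous update map has a unique fixed point, namely the equilibrium state in which a flow is accepted exactly when it is a driver: if step(s) = s then for every flow F, s F = true iff F is a driver. -/
/-- The synchronous update map has a unique fixed point, namely the
equilibrium state where a flow is accepted exactly when it is a driver: if
`step s = s` then for every flow `F`, `s F = true ↔ driver F`. -/
theorem fixed_point_is_equilibrium
    {V : Type*} [Fintype V] [LinearOrder V]
    (competing : V → V → Prop)
    (hsymm : ∀ A B : V, competing A B → competing B A)
    (hirrefl : ∀ A : V, ¬ competing A A)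
    (driver : V → Prop)
    (hdriver : ∀ F : V, driver F ↔ ∀ G : V, competing G F → G < F → ¬ driver G)
    (step : (V → Bool) → V → Bool)
    (hstep : ∀ (s : V → Bool) (F : V),
      step s F = true ↔ ∀ G : V, competing G F → G < F → s G = false)
    (s : V → Bool)
    (hfix : step s = s) :
    ∀ F : V, s F = true ↔ driver F := by
  intro F
  induction F using WellFoundedLT.induction with
  | ind F ih =>
    have h : s F = true ↔ ∀ G : V, competing G F → G < F → s G = false := by
      rw [← congrFun hfix F]; exact hstep s F
    rw [h, hdriver F]
    constructor
    · intro hall G hc hlt hd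
      have := hall G hc hlt
      rw [← ih G hlt] at hd
      simp [hd] at this
    · intro hall G hc hlt
      have := hall G hc hlt
      rw [← ih G hlt] at this
      simpa using this
end

section
/- For every initial state s₀, every flow F, and every round t ≥ rank(F), the trajectory of the synchronous dynamics satisfies s_t(F) = true iff F is a driver. That is, the flow that is m-th in the criticality order is accepted if it is a driver and paused otherwise after at most m rounds, for any starting configuration. (This is the per-flow convergence bound established in the inductive proof of the paper's convergence lemma.) -/
/-- For every initial state `s₀`, every flow `F`, and every round
`t ≥ rank F` (where `rank F` is 1 plus the number of flows strictly more
critical than `F`), the trajectory of the synchronous dynamics satisfies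
`s_t F = true ↔ F is a driver`. -/
theorem converges_within_rank
    {V : Type*} [Fintype V] [LinearOrder V]
    (competing : V → V → Prop)
    (hsymm : ∀ A B : V, competing A B → competing B A)
    (hirrefl : ∀ A : V, ¬ competing A A)
    (driver : V → Prop)
    (hdriver : ∀ F : V, driver F ↔ ∀ G : V, competing G F → G < F → ¬ driver G)
    (step : (V → Bool) → V → Bool)
    (hstep : ∀ (s : V → Bool) (F : V),
      step s F = true ↔ ∀ G : V, competing G F → G < F → s G = false) :
    ∀ (s₀ : V → Bool) (F : V) (t : ℕ),
      1 + (Finset.univ.filter (fun G : V => G < F)).card ≤ t →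
      (step^[t] s₀ F = true ↔ driver F) := by
  intro s₀ F
  induction F using WellFoundedLT.induction with
  | _ F ih =>
    intro t ht
    obtain ⟨t', rfl⟩ : ∃ t', t = t' + 1 := ⟨t - 1, by omega⟩
    have key : ∀ G : V, G < F → (step^[t'] s₀ G = false ↔ ¬ driver G) := by
      intro G hlt
      have hss : (Finset.univ.filter (fun H : V => H < G)) ⊂
          (Finset.univ.filter (fun H : V => H < F)) := by
        constructor
        · intro x hx; simp only [Finset.mem_filter, Finset.mem_univ, true_and] at hx ⊢
          exact hx.trans hlt
        · intro hsub
          have := hsub (by simp [hlt] : G ∈ Finset.univ.filter (fun H : V => H < F))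
          simp at this
      have hcard := Finset.card_lt_card hss
      have hrank : 1 + (Finset.univ.filter (fun H : V => H < G)).card ≤ t' := by omega
      have := ih G hlt t' hrank
      constructor
      · intro hf hd
        rw [← this] at hd
        simp [hd] at hf
      · intro hd
        cases hv : step^[t'] s₀ G with
        | false => rfl
        | true => exact absurd (this.mp hv) hd
    rw [Function.iterate_succ_apply', hstep, hdriver]
    constructor
    · intro h G hGF hlt
      exact (key G hlt).mp (h G hGF hlt)
    · intro h G hGF hlt
      exact (key G hlt).mpr (h G hGF hlt)
end

section
/- For every initial state s₀ and every round t ≥ |V| (the total number of flows), the trajectory of the synchronous dynamics has reached equilibrium: for every flow F, s_t(F) = true iff F is a driver. In particular, for a stable workload the system converges to the equilibrium in finitely many rounds, and the equilibrium reached is independent of the initial state. -/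
/-- For every initial state `s₀` and every round `t ≥ |V|`, the
trajectory of the synchronous dynamics has reached the equilibrium: for every
flow `F`, `s_t F = true ↔ F is a driver`. In particular the system converges in
finitely many rounds, to an equilibrium independent of the initial state. -/
theorem converges_within_card
    {V : Type*} [Fintype V] [LinearOrder V]
    (competing : V → V → Prop)
    (hsymm : ∀ A B : V, competing A B → competing B A)
    (hirrefl : ∀ A : V, ¬ competing A A)
    (driver : V → Prop)
    (hdriver : ∀ F : V, driver F ↔ ∀ G : V, competing G F → G < F → ¬ driver G)
    (step : (V → Bool) → V → Bool)
    (hstep : ∀ (s : V → Bool) (F : V),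
      step s F = true ↔ ∀ G : V, competing G F → G < F → s G = false) :
    ∀ (s₀ : V → Bool) (t : ℕ), Fintype.card V ≤ t →
      ∀ F : V, (step^[t] s₀ F = true ↔ driver F) := by
  intro s₀ t ht F
  set rank : V → ℕ := fun F => (Finset.univ.filter (· < F)).card with hrank
  have hmono : ∀ G F : V, G < F → rank G < rank F := by
    intro G F hGF
    apply Finset.card_lt_card
    constructor
    · intro H hH
      simp only [Finset.mem_filter, Finset.mem_univ, true_and] at *
      exact lt_trans hH hGF
    · intro hsub
      have : G ∈ Finset.univ.filter (· < F) := by simp [hGF]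
      have := hsub this
      simp at this
  have key : ∀ t : ℕ, ∀ F : V, rank F < t → (step^[t] s₀ F = true ↔ driver F) := by
    intro t
    induction t using Nat.strong_induction_on with
    | _ t ih =>
      intro F hF
      obtain ⟨u, rfl⟩ : ∃ u, t = u + 1 := ⟨t - 1, by omega⟩
      rw [Function.iterate_succ_apply', hstep, hdriver]
      constructor
      · intro h G hGF hlt hdG
        have hG := ih u (by omega) G (by have := hmono G F hlt; omega)
        have := h G hGF hlt
        rw [hG.2 hdG] at this
        simp at this
      · intro h G hGF hlt
        have hG := ih u (by omega) G (by have := hmono G F hlt; omega)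
        have hnd := h G hGF hlt
        cases hb : step^[u] s₀ G with
        | false => rfl
        | true => exact absurd (hG.1 hb) hnd
  refine key t F (lt_of_lt_of_le ?_ ht)
  apply Finset.card_lt_card
  constructor
  · exact Finset.filter_subset _ _
  · intro hsub
    have := hsub (Finset.mem_univ F)
    simp at this
end

section
/- Define the precedential depth of a flow by well-founded recursion: depth(F) = 1 if F has no precedential flow, and otherwise depth(F) = 1 + max{ depth(G) : G precedential to F }. Then for every initial state s₀, every flow F, and every round t ≥ depth(F), the synchronous dynamics satisfies s_t(F) = true iff F is a driver. Consequently the system converges to the equilibrium within L rounds, where L is the length of the longest chain F_1, F_2, …, F_L in which each F_i is a precedential flow of F_{i+1}. (This is the sharp form of the paper's claim that convergence takes at most P_max + 1 RTTs.) -/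
/-- Let `depth` be the precedential depth: `depth F = 1` if `F` has
no precedential flow, and otherwise `1 + max { depth G : G precedential to F }`
(expressed below via `sSup` over `ℕ`, which is `0` on the empty set). Then for
every initial state `s₀`, every flow `F` and every `t ≥ depth F`,
`s_t F = true ↔ F is a driver`; consequently the dynamics reaches equilibrium
within `L` rounds whenever `L` bounds the length of every precedential chain. -/
theorem converges_within_depth
    {V : Type*} [Fintype V] [LinearOrder V]
    (competing : V → V → Prop)
    (hsymm : ∀ A B : V, competing A B → competing B A)
    (hirrefl : ∀ A : V, ¬ competing A A)
    (driver : V → Prop)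
    (hdriver : ∀ F : V, driver F ↔ ∀ G : V, competing G F → G < F → ¬ driver G)
    (step : (V → Bool) → V → Bool)
    (hstep : ∀ (s : V → Bool) (F : V),
      step s F = true ↔ ∀ G : V, competing G F → G < F → s G = false)
    (depth : V → ℕ)
    (hdepth : ∀ F : V,
      depth F = sSup {n : ℕ | ∃ G : V, competing G F ∧ G < F ∧ depth G = n} + 1) :
    (∀ (s₀ : V → Bool) (F : V) (t : ℕ), depth F ≤ t →
        (step^[t] s₀ F = true ↔ driver F)) ∧
    (∀ L : ℕ,
        (∀ (k : ℕ) (c : ℕ → V),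
          (∀ i < k, competing (c i) (c (i + 1)) ∧ c i < c (i + 1)) → k + 1 ≤ L) →
        ∀ (s₀ : V → Bool) (t : ℕ), L ≤ t →
          ∀ F : V, (step^[t] s₀ F = true ↔ driver F)) := by
  have hpos : ∀ F : V, 1 ≤ depth F := fun F => by rw [hdepth F]; omega
  have hbdd : ∀ F : V,
      BddAbove {n : ℕ | ∃ G : V, competing G F ∧ G < F ∧ depth G = n} := by
    intro F
    exact Set.Finite.bddAbove ((Set.finite_range depth).subset
      (fun n ⟨G, _, _, h⟩ => ⟨G, h⟩))
  have hlt : ∀ G F : V, competing G F → G < F → depth G < depth F := by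
    intro G F hc hl
    have hmem : depth G ∈ {n : ℕ | ∃ G : V, competing G F ∧ G < F ∧ depth G = n} :=
      ⟨G, hc, hl, rfl⟩
    have := le_csSup (hbdd F) hmem
    rw [hdepth F]; omega
  have claim1 : ∀ (t : ℕ) (s₀ : V → Bool) (F : V), depth F ≤ t →
      (step^[t] s₀ F = true ↔ driver F) := by
    intro t
    induction t with
    | zero => intro s₀ F h; exact absurd h (by have := hpos F; omega)
    | succ t IH =>
      intro s₀ F h
      rw [Function.iterate_succ_apply', hstep, hdriver F]
      constructor
      · intro h1 G hc hl hd
        have hiff := IH s₀ G (by have := hlt G F hc hl; omega)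
        have hf := h1 G hc hl
        rw [← hiff] at hd
        rw [hd] at hf
        exact Bool.true_eq_false.mp hf
      · intro h1 G hc hl
        have hiff := IH s₀ G (by have := hlt G F hc hl; omega)
        cases hb : step^[t] s₀ G
        · rfl
        · exact absurd (hiff.mp hb) (h1 G hc hl)
  refine ⟨fun s₀ F t ht => claim1 t s₀ F ht, ?_⟩
  have hchain : ∀ (n : ℕ) (F : V), depth F = n →
      ∃ (k : ℕ) (c : ℕ → V),
        (∀ i < k, competing (c i) (c (i + 1)) ∧ c i < c (i + 1)) ∧
        k + 1 = depth F ∧ c k = F := by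
    intro n
    induction n using Nat.strong_induction_on with
    | _ n IH =>
      intro F hF
      by_cases hne : {n : ℕ | ∃ G : V, competing G F ∧ G < F ∧ depth G = n}.Nonempty
      · obtain ⟨G, hc, hl, hdG⟩ := Nat.sSup_mem hne (hbdd F)
        have hGlt : depth G < depth F := hlt G F hc hl
        obtain ⟨k, c, hch, hk, hck⟩ := IH (depth G) (by omega) G rfl
        refine ⟨k + 1, fun i => if i < k + 1 then c i else F, ?_, ?_, ?_⟩
        · intro i hi
          rcases Nat.lt_or_ge i k with h' | h'
          · simp only [if_pos (by omega : i < k + 1), if_pos (by omega : i + 1 < k + 1)]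
            exact hch i h'
          · have hik : i = k := by omega
            simp only [if_pos (show i < k + 1 by omega), if_neg (show ¬ i + 1 < k + 1 by omega)]
            rw [hik, hck]
            exact ⟨hc, hl⟩
        · rw [hdepth F, ← hdG]; omega
        · simp
      · rw [Set.not_nonempty_iff_eq_empty] at hne
        have hd1 : depth F = 1 := by rw [hdepth F, hne, csSup_empty]; rfl
        exact ⟨0, fun _ => F, fun i hi => absurd hi (by omega), by omega, rfl⟩
  intro L hL s₀ t ht F
  obtain ⟨k, c, hch, hk, _⟩ := hchain (depth F) F rfl
  have hdF : depth F ≤ L := by have := hL k c hch; omega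
  exact claim1 t s₀ F (le_trans hdF ht)
end

section
/- If some one-at-a-time schedule meets every flow's deadline, then serving the flows in nondecreasing deadline order (Earliest Deadline First) also meets every deadline: given nonnegative sizes s : Fin n → ℝ and deadlines d : Fin n → ℝ, if there exists a permutation σ with ∑_{j=1}^{k} s_{σ(j)} ≤ d_{σ(k)} for all k, then every permutation π for which d ∘ π is monotone nondecreasing also satisfies ∑_{j=1}^{k} s_{π(j)} ≤ d_{π(k)} for all k. -/
/-- If some one-at-a-time schedule meets every flow's deadline,
then serving the flows in nondecreasing deadline order (Earliest Deadline
First) also meets every deadline: given nonnegative sizes `s` and deadlines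
`d`, if some permutation `σ` satisfies `∑_{j ≤ k} s (σ j) ≤ d (σ k)` for all
`k`, then every permutation `π` with `d ∘ π` monotone nondecreasing also
satisfies `∑_{j ≤ k} s (π j) ≤ d (π k)` for all `k`. -/
theorem edf_meets_deadlines_if_feasible
    (n : ℕ) (s d : Fin n → ℝ)
    (hs : ∀ i : Fin n, 0 ≤ s i)
    (hfeas : ∃ σ : Equiv.Perm (Fin n),
      ∀ k : Fin n, ∑ j ∈ Finset.Iic k, s (σ j) ≤ d (σ k)) :
    ∀ π : Equiv.Perm (Fin n), Monotone (d ∘ π) →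
      ∀ k : Fin n, ∑ j ∈ Finset.Iic k, s (π j) ≤ d (π k) := by
  obtain ⟨σ, hσ⟩ := hfeas
  intro π hmono k
  -- positions under σ of the flows π j, j ≤ k
  set B : Finset (Fin n) := (Finset.Iic k).image (fun j => σ.symm (π j)) with hB
  have hBne : B.Nonempty := ⟨σ.symm (π k), Finset.mem_image.2 ⟨k, Finset.mem_Iic.2 le_rfl, rfl⟩⟩
  set m : Fin n := B.max' hBne with hm
  obtain ⟨j₀, hj₀k, hj₀⟩ := Finset.mem_image.1 (B.max'_mem hBne)
  have key : ∑ j ∈ Finset.Iic k, s (π j) ≤ ∑ j ∈ Finset.Iic m, s (σ j) := by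
    have h1 : ∑ j ∈ Finset.Iic k, s (π j)
        = ∑ j ∈ Finset.Iic k, s (σ (σ.symm (π j))) := by
      simp
    rw [h1]
    have h2 : ∑ j ∈ Finset.Iic k, s (σ (σ.symm (π j)))
        = ∑ i ∈ B, s (σ i) := by
      rw [hB, Finset.sum_image]
      intro a _ b _ hab
      exact π.injective (σ.symm.injective hab)
    rw [h2]
    apply Finset.sum_le_sum_of_subset_of_nonneg
    · intro i hi
      exact Finset.mem_Iic.2 (B.le_max' i hi)
    · intro i _ _
      exact hs _
  have hdm : d (σ m) ≤ d (π k) := by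
    have : σ m = π j₀ := by rw [hm, ← hj₀]; simp
    rw [this]
    exact hmono (Finset.mem_Iic.1 hj₀k)
  exact key.trans ((hσ m).trans hdm)
end
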